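/- Let p be an odd prime such that 2 and 17 are both quadratic residues modulo p. If t and t′ are integers with t² ≡ 2 (mod p) and t′² ≡ 2 (mod p), then −7 + 4t is a quadratic residue modulo p if and only if −7 + 4t′ is a quadratic residue modulo p. -/
import Mathlib


/-- An integer `a` is a quadratic residue modulo `p` if `p ∤ a` and `a` is congruent
to a square modulo `p`. -/
def IsQuadRes (p : ℕ) (a : ℤ) : Prop :=
  ¬ ((p : ℤ) ∣ a) ∧ ∃ b : ℤ, a ≡ b ^ 2 [ZMOD (p : ℤ)]

lemma isQuadRes_iff (p : ℕ) [NeZero p] (a : ℤ) :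
    IsQuadRes p a ↔ (a : ZMod p) ≠ 0 ∧ IsSquare (a : ZMod p) := by
  unfold IsQuadRes
  constructor
  · rintro ⟨hnd, b, hb⟩
    refine ⟨fun h => hnd ((ZMod.intCast_zmod_eq_zero_iff_dvd a p).mp h), ?_⟩
    have : (a : ZMod p) = ((b ^ 2 : ℤ) : ZMod p) := (ZMod.intCast_eq_intCast_iff' a _ p).mpr hb
    exact ⟨(b : ZMod p), by push_cast at this; rw [this]; ring⟩
  · rintro ⟨hne, r, hr⟩
    obtain ⟨c, rfl⟩ := ZMod.intCast_surjective r
    refine ⟨fun h => hne ((ZMod.intCast_zmod_eq_zero_iff_dvd a p).mpr h), c, ?_⟩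
    refine (ZMod.intCast_eq_intCast_iff' a _ p).mp ?_
    push_cast
    rw [hr]; ring

lemma aux_sq_mul (p : ℕ) [Fact p.Prime] (hp2 : p ≠ 2) (u v : ZMod p)
    (hu : u ≠ 0) (hv : v ≠ 0) (hsq : IsSquare (u * v)) : (IsSquare u ↔ IsSquare v) := by
  have hchar : ringChar (ZMod p) ≠ 2 := by rw [ZMod.ringChar_zmod_n]; exact hp2
  have hmul : quadraticChar (ZMod p) (u * v) = 1 :=
    (quadraticChar_one_iff_isSquare (mul_ne_zero hu hv)).mpr hsq
  rw [map_mul] at hmul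
  rw [← quadraticChar_one_iff_isSquare hu, ← quadraticChar_one_iff_isSquare hv]
  rcases quadraticChar_dichotomy hu with h1 | h1 <;>
    rcases quadraticChar_dichotomy hv with h2 | h2 <;>
      simp_all

/-- Let `p` be an odd prime such that `2` and `17` are quadratic
residues mod `p`.  If `t² ≡ 2 (mod p)` and `t′² ≡ 2 (mod p)`, then `−7 + 4t` is a
quadratic residue mod `p` iff `−7 + 4t′` is. -/
theorem quadRes_neg_seven_add_four_sqrt_two_well_defined
    (p : ℕ) (hp : p.Prime) (hodd : Odd p)
    (h2 : IsQuadRes p 2) (h17 : IsQuadRes p 17)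
    (t t' : ℤ) (ht : t ^ 2 ≡ 2 [ZMOD (p : ℤ)]) (ht' : t' ^ 2 ≡ 2 [ZMOD (p : ℤ)]) :
    IsQuadRes p (-7 + 4 * t) ↔ IsQuadRes p (-7 + 4 * t') := by
  haveI : Fact p.Prime := ⟨hp⟩
  have hp2 : p ≠ 2 := by rintro rfl; exact (Nat.not_odd_iff_even.mpr (by decide)) hodd
  rw [isQuadRes_iff, isQuadRes_iff]
  rw [isQuadRes_iff] at h17
  have hT : ((t : ZMod p)) ^ 2 = 2 := by
    have := (ZMod.intCast_eq_intCast_iff' _ _ p).mpr ht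
    push_cast at this; exact this
  have hT' : ((t' : ZMod p)) ^ 2 = 2 := by
    have := (ZMod.intCast_eq_intCast_iff' _ _ p).mpr ht'
    push_cast at this; exact this
  have hcase : (t' : ZMod p) = t ∨ (t' : ZMod p) = -(t : ZMod p) := by
    have h0 : ((t' : ZMod p) - t) * ((t' : ZMod p) + t) = 0 := by
      have : ((t' : ZMod p)) ^ 2 - (t : ZMod p) ^ 2 = 0 := by rw [hT, hT']; ring
      linear_combination this
    rcases mul_eq_zero.mp h0 with h | h
    · left; linear_combination h
    · right; linear_combination h
  rcases hcase with h | h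
  · push_cast
    rw [h]
  · have key : ((-7 + 4 * t : ℤ) : ZMod p) * ((-7 + 4 * t' : ℤ) : ZMod p) = 17 := by
      push_cast
      rw [h]
      linear_combination (-16 : ZMod p) * hT
    have h17' : ((17 : ℤ) : ZMod p) ≠ 0 ∧ IsSquare ((17 : ℤ) : ZMod p) := h17
    have h17n : (17 : ZMod p) ≠ 0 := by push_cast at h17'; exact h17'.1
    have hu : ((-7 + 4 * t : ℤ) : ZMod p) ≠ 0 := fun h0 => h17n (by rw [← key, h0, zero_mul])
    have hv : ((-7 + 4 * t' : ℤ) : ZMod p) ≠ 0 := fun h0 => h17n (by rw [← key, h0, mul_zero])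
    have hsq : IsSquare (((-7 + 4 * t : ℤ) : ZMod p) * ((-7 + 4 * t' : ℤ) : ZMod p)) := by
      rw [key]; have := h17'.2; push_cast at this; exact this
    exact and_congr (iff_of_true hu hv) (aux_sq_mul p hp2 _ _ hu hv hsq)
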